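/- arXiv:quant-ph/0411110 — 5 statements merged into one kernel-verified Lean document; each statement's English description precedes it below -/
import Mathlib

section
/- Let B₁, B₂, B₃ be 3×3 unitary matrices with Tr(B_i† B_j) = 0 for all i ≠ j. Suppose {e₀, e₁, e₂} is an orthonormal basis of ℂ³ with B₂†B₁ e_i = ω^i e_i for each i, and {f₀, f₁, f₂} is an orthonormal basis with B₃†B₂ f_j = ω^j f_j for each j, where ω = e^{2πi/3}. Then the quantity |⟨e_i, f_j⟩|² depends only on (j − i) mod 3; that is, |⟨e_i, f_j⟩| = |⟨e_{i'}, f_{j'}⟩| whenever j − i ≡ j' − i' (mod 3). -/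
/-!
Let `E`, `F` be the unitaries with columns `eᵢ`, `fⱼ`, and `D = diag(1, ω, ω²)`. Then
`B₂†B₁ = E D E†` and `B₃†B₂ = F D F†`, so `0 = Tr(B₃†B₁) = Tr(G D G† D)` for the unitary
`G = E†F`. With `qᵢⱼ = |Gᵢⱼ|² = |⟨eᵢ, fⱼ⟩|²` this says `∑ ωⁱ⁺ʲ qᵢⱼ = 0`; as the `qᵢⱼ` are real and
`1, ω` are linearly independent over `ℝ`, the sums of `q` along the three anti-diagonals
`i + j ≡ s` coincide. Rows and columns of `q` have sum `1` because `G` is unitary. Adding up the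
four lines through `(i, j)` of the affine plane `(ZMod 3)²` then expresses `3 qᵢⱼ` as a constant
plus the sum of `q` along the diagonal `j - i ≡ const`.
-/

open Matrix

/-- `ω = e^{2πi/3}`, the primitive cube root of unity. -/
noncomputable def ω : ℂ := Complex.exp (2 * Real.pi * Complex.I / 3)

lemma isPrimitiveRoot_ω : IsPrimitiveRoot ω 3 := by
  simpa [ω] using Complex.isPrimitiveRoot_exp 3 (by norm_num)

lemma ω_pow_three : ω ^ 3 = 1 := isPrimitiveRoot_ω.pow_eq_one

lemma ω_sq_add_ω_add_one : ω ^ 2 + ω + 1 = 0 := by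
  linear_combination (by simpa [Finset.sum_range_succ] using
    isPrimitiveRoot_ω.geom_sum_eq_zero (by norm_num) : 1 + ω + ω ^ 2 = 0)

lemma ω_im_pos : 0 < ω.im := by
  have hre : (2 * Real.pi * Complex.I / 3).re = 0 := by simp
  have him : (2 * Real.pi * Complex.I / 3).im = 2 * Real.pi / 3 := by simp
  rw [ω, Complex.exp_im, hre, him]
  exact mul_pos (Real.exp_pos _)
    (Real.sin_pos_of_pos_of_lt_pi (by positivity) (by linarith [Real.pi_pos]))

lemma eq_and_eq_of_add_ω_mul_add_ω_sq_mul_eq_zero {a b c : ℝ}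
    (h : (a : ℂ) + ω * b + ω ^ 2 * c = 0) : a = c ∧ b = c := by
  have h' : ((a - c : ℝ) : ℂ) + ω * (b - c : ℝ) = 0 := by
    push_cast; linear_combination h - c * ω_sq_add_ω_add_one
  have him : ω.im * (b - c) = 0 := by simpa using congrArg Complex.im h'
  have hb : b = c := sub_eq_zero.mp ((mul_eq_zero.mp him).resolve_left ω_im_pos.ne')
  refine ⟨?_, hb⟩
  rw [hb, sub_self, Complex.ofReal_zero, mul_zero, add_zero, Complex.ofReal_eq_zero] at h'
  exact sub_eq_zero.mp h'

/-- The four lines of the affine plane `(ZMod 3)²` through `(i, j)` cover that point four times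
and every other point once. -/
lemma three_smul_add_sum_sum_eq_sum_lines {M : Type*} [AddCommMonoid M] (q : Fin 3 → Fin 3 → M)
    (i j : Fin 3) :
    3 • q i j + ∑ k, ∑ l, q k l =
      ∑ l, q i l + ∑ k, q k j + ∑ k, q k (i + j - k) + ∑ k, q k (k + (j - i)) := by
  fin_cases i <;> fin_cases j <;>
    simp only [Fin.sum_univ_three, Fin.reduceFinMk, Fin.reduceSub, Fin.reduceAdd, Fin.isValue] <;>
    abel

lemma apply_eq_apply_of_sub_eq_of_line_sums {M : Type*} [AddCommGroup M] [IsAddTorsionFree M]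
    {q : Fin 3 → Fin 3 → M} {r c a : M} (hrow : ∀ i, ∑ j, q i j = r)
    (hcol : ∀ j, ∑ i, q i j = c) (hanti : ∀ s, ∑ k, q k (s - k) = a) {i j i' j' : Fin 3}
    (h : j - i = j' - i') : q i j = q i' j' := by
  have h₁ := three_smul_add_sum_sum_eq_sum_lines q i j
  have h₂ := three_smul_add_sum_sum_eq_sum_lines q i' j'
  rw [hrow, hcol, hanti, h] at h₁
  rw [hrow, hcol, hanti] at h₂
  exact nsmul_right_injective three_ne_zero (add_right_cancel (h₁.trans h₂.symm))

lemma exists_forall_sum_sub_eq_of_sum_ω_pow_mul_eq_zero {q : Fin 3 → Fin 3 → ℝ}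
    (h : ∑ i : Fin 3, ∑ j : Fin 3, ω ^ (i : ℕ) * ω ^ (j : ℕ) * q i j = 0) :
    ∃ a, ∀ s, ∑ k, q k (s - k) = a := by
  have hsum : ((∑ k, q k (0 - k) : ℝ) : ℂ) + ω * (∑ k, q k (1 - k) : ℝ)
      + ω ^ 2 * (∑ k, q k (2 - k) : ℝ) = 0 := by
    simp only [Fin.sum_univ_three, Fin.reduceSub, Fin.isValue, Fin.val_zero, Fin.val_one,
      Fin.val_two, Complex.ofReal_add] at h ⊢
    linear_combination h - (q 1 2 + q 2 1 + ω * q 2 2) * ω_pow_three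
  obtain ⟨h₀, h₁⟩ := eq_and_eq_of_add_ω_mul_add_ω_sq_mul_eq_zero hsum
  exact ⟨_, fun s => by fin_cases s; exacts [h₀, h₁, rfl]⟩

section Matrix

variable {n 𝕜 : Type*} [Fintype n] [DecidableEq n]

lemma conjTranspose_mul_self_transpose_of_eq_one {R : Type*} [Semiring R] [StarRing R]
    {e : n → n → R} (he : ∀ i j, ∑ t, star (e i t) * e j t = if i = j then 1 else 0) :
    (of e)ᵀᴴ * (of e)ᵀ = 1 := by
  ext i j
  simpa [mul_apply, one_apply] using he i j

lemma mul_transpose_of_eq_transpose_of_mul_diagonal {R : Type*} [CommSemiring R]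
    {A : Matrix n n R} {e : n → n → R} {d : n → R} (h : ∀ i, A *ᵥ e i = d i • e i) :
    A * (of e)ᵀ = (of e)ᵀ * diagonal d := by
  ext t i
  rw [mul_diagonal]
  simpa [mul_apply, mulVec, dotProduct, mul_comm] using congrFun (h i) t

lemma eq_mul_mul_star_of_mul_eq_mul {M : Type*} [Monoid M] [StarMul M] {a u d : M}
    (hu : u ∈ unitary M) (h : a * u = u * d) : a = u * d * star u := by
  rw [← h, mul_assoc, Unitary.mul_star_self_of_mem hu, mul_one]

lemma trace_mul_diagonal_mul_conjTranspose_mul_diagonal [RCLike 𝕜] (G : Matrix n n 𝕜)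
    (d : n → 𝕜) :
    trace (G * diagonal d * Gᴴ * diagonal d) = ∑ i, ∑ j, d i * d j * (‖G i j‖ ^ 2 : ℝ) := by
  refine Finset.sum_congr rfl fun i _ => ?_
  rw [diag_apply, mul_diagonal, mul_apply, Finset.sum_mul]
  refine Finset.sum_congr rfl fun j _ => ?_
  rw [mul_diagonal, conjTranspose_apply, RCLike.ofReal_pow, ← RCLike.mul_conj, RCLike.star_def]
  ring

lemma sum_norm_sq_of_mem_unitaryGroup [RCLike 𝕜] {G : Matrix n n 𝕜}
    (hG : G ∈ unitaryGroup n 𝕜) (i : n) : ∑ j, ‖G i j‖ ^ 2 = 1 := by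
  have h : (G * Gᴴ) i i = 1 := by
    rw [← star_eq_conjTranspose, Unitary.mul_star_self_of_mem hG, one_apply_eq]
  simp only [mul_apply, conjTranspose_apply, RCLike.star_def, RCLike.mul_conj] at h
  exact_mod_cast h

end Matrix

/-- Let `B₁, B₂, B₃` (indexed `B 0, B 1, B 2`) be `3 × 3` unitaries with
`Tr(Bᵢ† Bⱼ) = 0` for `i ≠ j`. If `{eᵢ}` is an orthonormal basis with
`B₂†B₁ eᵢ = ωⁱ eᵢ` and `{fⱼ}` an orthonormal basis with `B₃†B₂ fⱼ = ωʲ fⱼ`,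
then `|⟨eᵢ, fⱼ⟩|` depends only on `(j − i) mod 3`. -/
theorem stmt_7 (B : Fin 3 → Matrix (Fin 3) (Fin 3) ℂ)
    (hB : ∀ i, B i ∈ Matrix.unitaryGroup (Fin 3) ℂ)
    (horth : ∀ i j, i ≠ j → ((B i)ᴴ * B j).trace = 0)
    (e f : Fin 3 → (Fin 3 → ℂ))
    (he : ∀ i j, ∑ t, star (e i t) * e j t = if i = j then 1 else 0)
    (hf : ∀ i j, ∑ t, star (f i t) * f j t = if i = j then 1 else 0)
    (heig : ∀ i, ((B 1)ᴴ * B 0).mulVec (e i) = ω ^ (i : ℕ) • e i)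
    (hfeig : ∀ j, ((B 2)ᴴ * B 1).mulVec (f j) = ω ^ (j : ℕ) • f j) :
    ∀ i j i' j' : Fin 3, j - i = j' - i' →
      ‖∑ t, star (e i t) * f j t‖ =
        ‖∑ t, star (e i' t) * f j' t‖ := by
  intro i j i' j' hij
  set E := (of e)ᵀ
  set F := (of f)ᵀ
  set D : Matrix (Fin 3) (Fin 3) ℂ := diagonal fun k : Fin 3 => ω ^ (k : ℕ)
  have hE : E ∈ unitaryGroup (Fin 3) ℂ :=
    mem_unitaryGroup_iff'.mpr (conjTranspose_mul_self_transpose_of_eq_one he)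
  have hF : F ∈ unitaryGroup (Fin 3) ℂ :=
    mem_unitaryGroup_iff'.mpr (conjTranspose_mul_self_transpose_of_eq_one hf)
  set G := Eᴴ * F
  have hG : G ∈ unitaryGroup (Fin 3) ℂ := Submonoid.mul_mem _ (Unitary.star_mem hE) hF
  have hU : (B 1)ᴴ * B 0 = E * D * Eᴴ :=
    eq_mul_mul_star_of_mul_eq_mul hE (mul_transpose_of_eq_transpose_of_mul_diagonal heig)
  have hV : (B 2)ᴴ * B 1 = F * D * Fᴴ :=
    eq_mul_mul_star_of_mul_eq_mul hF (mul_transpose_of_eq_transpose_of_mul_diagonal hfeig)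
  have hB₁ : B 1 * (B 1)ᴴ = 1 := Unitary.mul_star_self_of_mem (hB 1)
  have htrace : trace (G * D * Gᴴ * D) = 0 := calc
    trace (G * D * Gᴴ * D) = trace (Eᴴ * (F * D * Fᴴ * E * D)) := by
      simp only [G, conjTranspose_mul, conjTranspose_conjTranspose, Matrix.mul_assoc]
    _ = trace ((B 2)ᴴ * B 1 * ((B 1)ᴴ * B 0)) := by
      rw [trace_mul_comm, hU, hV]
      simp only [Matrix.mul_assoc]
    _ = trace ((B 2)ᴴ * B 0) := by
      rw [Matrix.mul_assoc, ← Matrix.mul_assoc (B 1), hB₁, Matrix.one_mul]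
    _ = 0 := horth 2 0 (by decide)
  obtain ⟨a, ha⟩ := exists_forall_sum_sub_eq_of_sum_ω_pow_mul_eq_zero (q := fun i j => ‖G i j‖ ^ 2)
    (by rwa [trace_mul_diagonal_mul_conjTranspose_mul_diagonal] at htrace)
  have hq := apply_eq_apply_of_sub_eq_of_line_sums (sum_norm_sq_of_mem_unitaryGroup hG)
    (fun j => by simpa using sum_norm_sq_of_mem_unitaryGroup (Unitary.star_mem hG) j) ha hij
  exact (pow_left_inj₀ (norm_nonneg _) (norm_nonneg _) two_ne_zero).mp hq
end

section
/- Let V be a 3×3 unitary matrix such that |V_{ij}| depends only on (j − i) mod 3, i.e., there exist nonnegative reals r₀, r₁, r₂ with |V_{ij}| = r_{(j−i) mod 3} for all i, j. Then there exist diagonal unitary matrices U₁, U₂ and complex numbers a, b, c such that U₁ V U₂† has (i,j) entry equal to a when j − i ≡ 0 (mod 3), c when j − i ≡ 1 (mod 3), and b when j − i ≡ 2 (mod 3); in other words, V can be brought to circulant form by adjusting the phases of its rows and columns. -/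
/-!
Multiplying the rows and columns of `V` by phases, we may assume that its first row and first
column are nonnegative reals. If all `r k` are nonzero, the orthogonality of rows `0, 1`, of
rows `2, 0` and of columns `0, 1` then force `V` into the shape `phaseNormalForm r ξ ψ` with two
free phases `ξ, ψ`, and a cube root of `ξ ψ` supplies the remaining row and column phases that
make it circulant. If some `r k` vanishes, the orthogonality of two suitable rows forces a second
one to vanish, so `V` is supported on a single cyclic diagonal and is phase equivalent to a
circulant permutation matrix.
-/

open Matrix ComplexConjugate

noncomputable def Complex.phase (z : ℂ) : Circle := Circle.exp (Complex.arg z)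

lemma Complex.norm_mul_phase (z : ℂ) : (‖z‖ : ℂ) * z.phase = z := by
  simp [Complex.phase, Circle.coe_exp]

lemma Complex.phase_inv_mul_self (z : ℂ) : ((z.phase : ℂ))⁻¹ * z = ‖z‖ := by
  rw [inv_mul_eq_iff_eq_mul₀ (Circle.coe_ne_zero _), mul_comm, z.norm_mul_phase]

lemma Circle.conj_coe (z : Circle) : conj (z : ℂ) = ((z : ℂ))⁻¹ := by
  rw [← Circle.coe_inv_eq_conj, Circle.coe_inv]

lemma Matrix.diagonal_circle_mem_unitaryGroup {n : Type*} [Fintype n] [DecidableEq n]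
    (d : n → Circle) : diagonal (fun i => (d i : ℂ)) ∈ unitaryGroup n ℂ := by
  rw [mem_unitaryGroup_iff, star_eq_conjTranspose, diagonal_conjTranspose,
    diagonal_mul_diagonal, ← diagonal_one]
  congr 1
  funext i
  simp [Complex.mul_conj]

section Unitary

variable {n : Type*} [Fintype n] [DecidableEq n] {W : Matrix n n ℂ}

lemma sum_mul_conj_eq_of_mem_unitaryGroup (hW : W ∈ unitaryGroup n ℂ) (i i' : n) :
    ∑ j, W i j * conj (W i' j) = (1 : Matrix n n ℂ) i i' := by
  rw [← mem_unitaryGroup_iff.mp hW, mul_apply]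
  simp

lemma sum_conj_mul_eq_of_mem_unitaryGroup (hW : W ∈ unitaryGroup n ℂ) (j j' : n) :
    ∑ i, conj (W i j) * W i j' = (1 : Matrix n n ℂ) j j' := by
  rw [← mem_unitaryGroup_iff'.mp hW, mul_apply]
  simp

end Unitary

def PhaseEquiv {m n : Type*} (M N : Matrix m n ℂ) : Prop :=
  ∃ (d : m → Circle) (e : n → Circle), ∀ i j, N i j = d i * M i j * conj (e j : ℂ)

namespace PhaseEquiv

variable {m n : Type*} {M N P : Matrix m n ℂ}

lemma trans (h₁ : PhaseEquiv M N) (h₂ : PhaseEquiv N P) : PhaseEquiv M P := by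
  obtain ⟨d, e, h₁⟩ := h₁
  obtain ⟨d', e', h₂⟩ := h₂
  refine ⟨d' * d, e' * e, fun i j => ?_⟩
  rw [h₂, h₁]
  simp only [Pi.mul_apply, Circle.coe_mul, map_mul]
  ring

lemma norm_apply (h : PhaseEquiv M N) (i : m) (j : n) : ‖N i j‖ = ‖M i j‖ := by
  obtain ⟨d, e, h⟩ := h
  simp [h, Circle.norm_coe]

lemma exists_eq_diagonal_mul_mul_conjTranspose [Fintype m] [Fintype n] [DecidableEq m]
    [DecidableEq n] (h : PhaseEquiv M N) :
    ∃ (d : m → Circle) (e : n → Circle),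
      N = diagonal (fun i => (d i : ℂ)) * M * (diagonal (fun j => (e j : ℂ)))ᴴ := by
  obtain ⟨d, e, h⟩ := h
  refine ⟨d, e, ?_⟩
  ext i j
  simp [h, diagonal_conjTranspose]

lemma mem_unitaryGroup [Fintype n] [DecidableEq n] {A B : Matrix n n ℂ} (h : PhaseEquiv A B)
    (hA : A ∈ unitaryGroup n ℂ) : B ∈ unitaryGroup n ℂ := by
  obtain ⟨d, e, rfl⟩ := h.exists_eq_diagonal_mul_mul_conjTranspose
  refine mul_mem (mul_mem (diagonal_circle_mem_unitaryGroup d) hA) ?_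
  rw [← star_eq_conjTranspose]
  exact Unitary.star_mem (diagonal_circle_mem_unitaryGroup e)

end PhaseEquiv

lemma exists_phaseEquiv_row_col_eq_norm {m n : Type*} (M : Matrix m n ℂ) (i₀ : m) (j₀ : n) :
    ∃ N, PhaseEquiv M N ∧ (∀ j, N i₀ j = ‖N i₀ j‖) ∧ ∀ i, N i j₀ = ‖N i j₀‖ := by
  set d : m → Circle := fun i => (M i j₀).phase⁻¹ * (M i₀ j₀).phase
  set e : n → Circle := fun j => (M i₀ j).phase
  have hN : PhaseEquiv M (of fun i j => d i * M i j * conj (e j : ℂ)) := ⟨d, e, fun _ _ => rfl⟩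
  refine ⟨_, hN, fun j => ?_, fun i => ?_⟩ <;>
    rw [hN.norm_apply, ← Complex.phase_inv_mul_self, of_apply] <;>
    simp only [d, e, Circle.coe_mul, Circle.coe_inv, Circle.conj_coe] <;>
    field_simp

lemma phaseEquiv_circulant_single {ι : Type*} [AddCommGroup ι] [Fintype ι] [DecidableEq ι]
    {V : Matrix ι ι ℂ} (hV : V ∈ unitaryGroup ι ℂ) (k : ι)
    (hk : ∀ i j, j - i ≠ k → V i j = 0) :
    PhaseEquiv V (circulant (Pi.single (-k) 1)) := by
  have hnorm : ∀ i, ‖V i (i + k)‖ = 1 := by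
    intro i
    have h := sum_mul_conj_eq_of_mem_unitaryGroup hV i i
    rw [Finset.sum_eq_single (i + k), one_apply_eq, Complex.mul_conj,
      Complex.normSq_eq_norm_sq] at h
    · exact (pow_eq_one_iff_of_nonneg (norm_nonneg _) two_ne_zero).mp (by exact_mod_cast h)
    · intro j _ hj
      rw [hk i j (fun h => hj (by rw [← h]; abel)), zero_mul]
    · simp
  refine ⟨fun i => (V i (i + k)).phase⁻¹, 1, fun i j => ?_⟩
  by_cases hj : j = i + k
  · subst hj
    simp [circulant_apply, Complex.phase_inv_mul_self, hnorm]
  · have : i - j ≠ -k := fun h => hj (by rw [← neg_sub, neg_inj] at h; rw [← h]; abel)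
    simp [circulant_apply, this, hk i j (fun h => hj (by rw [← h]; abel))]

section FinThree

variable {V : Matrix (Fin 3) (Fin 3) ℂ} {r : Fin 3 → ℝ}

open Fin.CommRing in
lemma diagonal_modulus_eq_zero_or (hV : V ∈ unitaryGroup (Fin 3) ℂ)
    (hmod : ∀ i j, ‖V i j‖ = r (j - i)) {k : Fin 3} (hk : r k = 0) :
    r (k + 1) = 0 ∨ r (k + 2) = 0 := by
  have hzero : ∀ i j, V i j = 0 → r (j - i) = 0 := fun i j h => by rw [← hmod, h, norm_zero]
  have h0 : V (-k) 0 = 0 := norm_eq_zero.mp (by rw [hmod, zero_sub, neg_neg, hk])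
  have h1 : V (1 - k) 1 = 0 := norm_eq_zero.mp (by rw [hmod, sub_sub_cancel, hk])
  have h := sum_mul_conj_eq_of_mem_unitaryGroup hV (-k) (1 - k)
  rw [one_apply_ne (by simp [sub_eq_neg_add]), Fin.sum_univ_three, h0, h1] at h
  simp only [zero_mul, map_zero, mul_zero, zero_add, mul_eq_zero, map_eq_zero] at h
  rcases h with h | h
  · exact .inr (by convert hzero _ _ h using 2; ring)
  · exact .inl (by convert hzero _ _ h using 2; ring)

lemma exists_support_single_diagonal (hV : V ∈ unitaryGroup (Fin 3) ℂ)
    (hmod : ∀ i j, ‖V i j‖ = r (j - i)) (h : ∃ k, r k = 0) :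
    ∃ k, ∀ i j, j - i ≠ k → V i j = 0 := by
  obtain ⟨k, hk⟩ := h
  suffices ∃ l, ∀ m, m ≠ l → r m = 0 by
    obtain ⟨l, hl⟩ := this
    exact ⟨l, fun i j hij => norm_eq_zero.mp ((hmod i j).trans (hl _ hij))⟩
  have hcases : ∀ a b : Fin 3, a ≠ b + 1 → a ≠ b + 2 → a = b := by decide
  rcases diagonal_modulus_eq_zero_or hV hmod hk with h | h
  · refine ⟨k + 2, fun m hm => ?_⟩
    by_cases hm' : m = k + 1
    exacts [hm' ▸ h, hcases m k hm' hm ▸ hk]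
  · refine ⟨k + 1, fun m hm => ?_⟩
    by_cases hm' : m = k + 2
    exacts [hm' ▸ h, hcases m k hm hm' ▸ hk]

end FinThree

noncomputable def phaseNormalForm (r : Fin 3 → ℝ) (ξ ψ : Circle) : Matrix (Fin 3) (Fin 3) ℂ :=
  !![r 0, r 1, r 2; r 2, r 0 * ξ, r 1 * ψ; r 1, r 2 * ξ * (ψ : ℂ)⁻¹, r 0 * ξ]

lemma eq_phaseNormalForm {W : Matrix (Fin 3) (Fin 3) ℂ} (hW : W ∈ unitaryGroup (Fin 3) ℂ)
    {r : Fin 3 → ℝ} (hmod : ∀ i j, ‖W i j‖ = r (j - i)) (hrow : ∀ j, W 0 j = ‖W 0 j‖)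
    (hcol : ∀ i, W i 0 = ‖W i 0‖) (h1 : r 1 ≠ 0) (h2 : r 2 ≠ 0) :
    W = phaseNormalForm r (W 1 1).phase (W 1 2).phase := by
  set ξ := (W 1 1).phase
  set ψ := (W 1 2).phase
  have hrow' : ∀ j, W 0 j = r j := fun j => by rw [hrow, hmod, sub_zero]
  have h10 : W 1 0 = r 2 := by rw [hcol, hmod]; rfl
  have h20 : W 2 0 = r 1 := by rw [hcol, hmod]; rfl
  have h11 : W 1 1 = r 0 * ξ := by rw [← (W 1 1).norm_mul_phase, hmod, sub_self]
  have h12 : W 1 2 = r 1 * ψ := by rw [← (W 1 2).norm_mul_phase, hmod]; rfl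
  have hrows01 := sum_mul_conj_eq_of_mem_unitaryGroup hW 0 1
  have hcols01 := sum_conj_mul_eq_of_mem_unitaryGroup hW 0 1
  have hrows20 := sum_mul_conj_eq_of_mem_unitaryGroup hW 2 0
  simp only [Fin.sum_univ_three, one_apply_ne (by decide : (0 : Fin 3) ≠ 1),
    one_apply_ne (by decide : (2 : Fin 3) ≠ 0), hrow', h10, h20, h11, h12, map_mul,
    Complex.conj_ofReal, Circle.conj_coe] at hrows01 hcols01 hrows20
  have hξ : (ξ : ℂ) * (ξ : ℂ)⁻¹ = 1 := mul_inv_cancel₀ (Circle.coe_ne_zero ξ)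
  have h21 : W 2 1 = r 2 * ξ * (ψ : ℂ)⁻¹ :=
    mul_left_cancel₀ (Complex.ofReal_ne_zero.mpr h1)
      (by linear_combination hcols01 - ξ * hrows01 + r 0 * r 1 * hξ)
  have h22 : W 2 2 = r 0 * ξ :=
    mul_left_cancel₀ (Complex.ofReal_ne_zero.mpr h2) (by linear_combination hrows20 - hcols01)
  ext i j
  fin_cases i <;> fin_cases j <;> simp [phaseNormalForm, hrow', h10, h20, h11, h12, h21, h22]

lemma exists_phaseEquiv_circulant_phaseNormalForm (r : Fin 3 → ℝ) (ξ ψ : Circle) :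
    ∃ v, PhaseEquiv (phaseNormalForm r ξ ψ) (circulant v) := by
  obtain ⟨θ, hθ⟩ := Circle.exp_surjective (ξ * ψ)
  set δ := Circle.exp (θ / 3)
  have hδ : (δ : ℂ) ^ 3 = ξ * ψ := by
    rw [← Circle.coe_pow, ← Circle.coe_mul, ← hθ, ← Circle.exp_natCast_mul]
    congr 2
    push_cast
    ring
  set γ := ξ * δ⁻¹
  -- Row phases `(1, δ⁻¹, γ⁻¹)` and column phases `(1, γ, δ)` give a circulant matrix exactly
  -- when `γ δ = ξ` and `δ ^ 3 = ξ ψ`.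
  refine ⟨![r 0, r 2 * (δ : ℂ)⁻¹, r 1 * (γ : ℂ)⁻¹], ![1, δ⁻¹, γ⁻¹], ![1, γ, δ], fun i j => ?_⟩
  fin_cases i <;> fin_cases j <;>
    simp [phaseNormalForm, γ, Circle.conj_coe] <;> field_simp <;> simp [hδ] <;> ring

theorem exists_phaseEquiv_circulant_of_norm_eq {V : Matrix (Fin 3) (Fin 3) ℂ}
    (hV : V ∈ unitaryGroup (Fin 3) ℂ) {r : Fin 3 → ℝ} (hmod : ∀ i j, ‖V i j‖ = r (j - i)) :
    ∃ v, PhaseEquiv V (circulant v) := by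
  by_cases hr : ∃ k, r k = 0
  · obtain ⟨k, hk⟩ := exists_support_single_diagonal hV hmod hr
    exact ⟨_, phaseEquiv_circulant_single hV k hk⟩
  push Not at hr
  obtain ⟨W, hVW, hrow, hcol⟩ := exists_phaseEquiv_row_col_eq_norm V 0 0
  have hWmod : ∀ i j, ‖W i j‖ = r (j - i) := fun i j => (hVW.norm_apply i j).trans (hmod i j)
  rw [eq_phaseNormalForm (hVW.mem_unitaryGroup hV) hWmod hrow hcol (hr 1) (hr 2)] at hVW
  obtain ⟨v, hv⟩ := exists_phaseEquiv_circulant_phaseNormalForm r _ _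
  exact ⟨v, hVW.trans hv⟩

theorem stmt_8_general (V : Matrix (Fin 3) (Fin 3) ℂ)
    (hV : V ∈ Matrix.unitaryGroup (Fin 3) ℂ)
    (r : Fin 3 → ℝ)
    (hmod : ∀ i j, ‖V i j‖ = r (j - i)) :
    ∃ U₁ U₂ : Matrix (Fin 3) (Fin 3) ℂ, ∃ a b c : ℂ,
      U₁.IsDiag ∧ U₁ ∈ Matrix.unitaryGroup (Fin 3) ℂ ∧
      U₂.IsDiag ∧ U₂ ∈ Matrix.unitaryGroup (Fin 3) ℂ ∧
      ∀ i j, (U₁ * V * U₂ᴴ) i j =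
        if j - i = 0 then a else if j - i = 1 then c else b := by
  obtain ⟨v, hv⟩ := exists_phaseEquiv_circulant_of_norm_eq hV hmod
  obtain ⟨d, e, hde⟩ := hv.exists_eq_diagonal_mul_mul_conjTranspose
  refine ⟨_, _, v 0, v 1, v 2, isDiag_diagonal _, diagonal_circle_mem_unitaryGroup d,
    isDiag_diagonal _, diagonal_circle_mem_unitaryGroup e, fun i j => ?_⟩
  rw [← hde]
  fin_cases i <;> fin_cases j <;> rfl

/-- A `3 × 3` unitary matrix `V` with `|V_{ij}|` depending only on `(j − i) mod 3`
can be brought to circulant form by adjusting the phases of rows and columns: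
there are diagonal unitaries `U₁, U₂` and complex numbers `a, b, c` such that
`U₁ V U₂†` has entry `a` when `j − i ≡ 0`, `c` when `j − i ≡ 1`, and `b` when
`j − i ≡ 2 (mod 3)`. -/
theorem stmt_8 (V : Matrix (Fin 3) (Fin 3) ℂ)
    (hV : V ∈ Matrix.unitaryGroup (Fin 3) ℂ)
    (r : Fin 3 → ℝ) (hr : ∀ i, 0 ≤ r i)
    (hmod : ∀ i j, ‖V i j‖ = r (j - i)) :
    ∃ U₁ U₂ : Matrix (Fin 3) (Fin 3) ℂ, ∃ a b c : ℂ,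
      U₁.IsDiag ∧ U₁ ∈ Matrix.unitaryGroup (Fin 3) ℂ ∧
      U₂.IsDiag ∧ U₂ ∈ Matrix.unitaryGroup (Fin 3) ℂ ∧
      ∀ i j, (U₁ * V * U₂ᴴ) i j =
        if j - i = 0 then a else if j - i = 1 then c else b :=
  stmt_8_general V hV r hmod
end

section
/- Let B₁, B₂, B₃ be 3×3 unitary matrices such that B₂†B₁ = Σ_{i=0}^{2} ω^i e_i e_i† and B₃†B₂ = Σ_{j=0}^{2} ω^j f_j f_j†, where {e_i} and {f_j} are orthonormal bases of ℂ³, ω = e^{2πi/3}, and suppose there exist complex constants A₀, A₁, A₂ with ⟨e_i, f_j⟩ = A_{(j−i) mod 3} for all i, j. Define u_x = (1/√3) Σ_{i=0}^{2} ω^{ix} e_i for x ∈ {0,1,2}. Then for every x the three vectors B₁u_x, B₂u_x, B₃u_x are pairwise orthogonal. -/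
/-!
Put `P = B₂†B₁ = ∑ ωⁱ eᵢeᵢ†` and `Q = B₃†B₂ = ∑ ωʲ fⱼfⱼ†`; unitarity of `B₂` gives
`B₃†B₁ = QP`. With `y = ω^x` we have `u_x = 3^{-1/2} v_y` for `v_y = ∑ yᵏ eₖ`
(`geomComb e y`), and `P v_y = v_{ωy}`.
The coefficients `⟨eⱼ, v_y⟩ = yʲ` are geometric in `j`, and the circulant condition
`⟨eᵢ, fⱼ⟩ = A_{j-i}` makes `⟨fⱼ, v_y⟩ = yʲ ⟨f₀, v_y⟩` geometric as well. Hence each of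
`⟨v_y, P v_y⟩`, `⟨v_y, Q v_y⟩`, `⟨v_y, Q v_{ωy}⟩` is a multiple of `∑ⱼ ζʲ` with `ζ = ω, ω, ω²`,
which vanishes.
-/

open Matrix

section RootsOfUnity

variable {n : ℕ}

lemma pow_val_add_of_pow_eq_one [NeZero n] {M : Type*} [Monoid M] {y : M} (hy : y ^ n = 1)
    (a b : Fin n) : y ^ ((a + b : Fin n) : ℕ) = y ^ (a : ℕ) * y ^ (b : ℕ) := by
  rw [Fin.val_add, ← pow_eq_pow_mod _ hy, pow_add]

lemma sum_fin_pow_eq_zero {z : ℂ} (hz : z ^ n = 1) (hz1 : z ≠ 1) :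
    ∑ j : Fin n, z ^ (j : ℕ) = 0 := by
  rw [Fin.sum_univ_eq_sum_range (z ^ ·), geom_sum_eq hz1, hz, sub_self, zero_div]

lemma star_mul_self_of_pow_eq_one [NeZero n] {y : ℂ} (hy : y ^ n = 1) : star y * y = 1 := by
  rw [Complex.star_def, Complex.conj_mul', Complex.norm_eq_one_of_pow_eq_one hy (NeZero.ne n)]
  norm_num

end RootsOfUnity

section InnerProduct

variable {ι κ : Type*} [Fintype ι] [Fintype κ]

lemma star_mulVec_dotProduct_mulVec (M N : Matrix κ κ ℂ) (v w : κ → ℂ) :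
    star (M *ᵥ v) ⬝ᵥ (N *ᵥ w) = star v ⬝ᵥ (Mᴴ * N) *ᵥ w := by
  rw [star_mulVec, ← dotProduct_mulVec, mulVec_mulVec]

lemma star_mulVec_smul_dotProduct_mulVec_smul (M N : Matrix κ κ ℂ) (c : ℂ) (v : κ → ℂ) :
    star (M *ᵥ (c • v)) ⬝ᵥ (N *ᵥ (c • v)) = star c * c * (star (M *ᵥ v) ⬝ᵥ (N *ᵥ v)) := by
  rw [mulVec_smul, mulVec_smul, star_smul, smul_dotProduct, dotProduct_smul, smul_smul,
    smul_eq_mul]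

lemma conjTranspose_mul_eq_of_mem_unitaryGroup [DecidableEq κ] {U : Matrix κ κ ℂ}
    (hU : U ∈ unitaryGroup κ ℂ) (M N : Matrix κ κ ℂ) : Mᴴ * N = (Mᴴ * U) * (Uᴴ * N) := by
  have hUU : U * Uᴴ = 1 := mem_unitaryGroup_iff.mp hU
  rw [Matrix.mul_assoc, ← Matrix.mul_assoc U, hUU, Matrix.one_mul]

lemma star_dotProduct_sum_smul_of_orthonormal [DecidableEq ι] {e : ι → κ → ℂ}
    (he : ∀ i j, star (e i) ⬝ᵥ e j = if i = j then 1 else 0) (a : ι → ℂ) (i : ι) :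
    star (e i) ⬝ᵥ ∑ k, a k • e k = a i := by
  simp [dotProduct_sum, dotProduct_smul, he]

lemma sum_smul_vecMulVec_mulVec (c : ι → ℂ) (g : ι → κ → ℂ) (v : κ → ℂ) :
    (∑ i, c i • vecMulVec (g i) (star (g i))) *ᵥ v = ∑ i, (c i * (star (g i) ⬝ᵥ v)) • g i := by
  simp [sum_mulVec, smul_mulVec, vecMulVec_mulVec, mul_smul]

lemma star_dotProduct_sum_smul_vecMulVec_mulVec (c : ι → ℂ) (g : ι → κ → ℂ) (v w : κ → ℂ) :
    star v ⬝ᵥ (∑ i, c i • vecMulVec (g i) (star (g i))) *ᵥ w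
      = ∑ i, c i * star (star (g i) ⬝ᵥ v) * (star (g i) ⬝ᵥ w) := by
  rw [sum_smul_vecMulVec_mulVec, dotProduct_sum]
  refine Finset.sum_congr rfl fun i _ => ?_
  rw [dotProduct_smul, smul_eq_mul, star_dotProduct v]
  ring

variable {n : ℕ}

lemma star_dotProduct_sum_smul_vecMulVec_mulVec_eq_zero [NeZero n]
    {f : Fin n → κ → ℂ} {v w : κ → ℂ} {y z c ζ : ℂ}
    (hv : ∀ j, star (f j) ⬝ᵥ v = y ^ (j : ℕ) * (star (f 0) ⬝ᵥ v))
    (hw : ∀ j, star (f j) ⬝ᵥ w = z ^ (j : ℕ) * (star (f 0) ⬝ᵥ w))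
    (hζ : c * (star y * z) = ζ) (hζn : ζ ^ n = 1) (hζ1 : ζ ≠ 1) :
    star v ⬝ᵥ (∑ j : Fin n, c ^ (j : ℕ) • vecMulVec (f j) (star (f j))) *ᵥ w = 0 := by
  have hexpand : star v ⬝ᵥ (∑ j : Fin n, c ^ (j : ℕ) • vecMulVec (f j) (star (f j))) *ᵥ w
      = star (star (f 0) ⬝ᵥ v) * (star (f 0) ⬝ᵥ w) * ∑ j : Fin n, ζ ^ (j : ℕ) := by
    rw [star_dotProduct_sum_smul_vecMulVec_mulVec, Finset.mul_sum, ← hζ]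
    refine Finset.sum_congr rfl fun j _ => ?_
    rw [hv, hw, star_mul, star_pow, mul_pow, mul_pow]
    ring
  rw [hexpand, sum_fin_pow_eq_zero hζn hζ1, mul_zero]

def geomComb (e : Fin n → κ → ℂ) (z : ℂ) : κ → ℂ := ∑ k : Fin n, z ^ (k : ℕ) • e k

lemma star_dotProduct_geomComb {e : Fin n → κ → ℂ}
    (he : ∀ i j, star (e i) ⬝ᵥ e j = if i = j then 1 else 0) (z : ℂ) (i : Fin n) :
    star (e i) ⬝ᵥ geomComb e z = z ^ (i : ℕ) :=
  star_dotProduct_sum_smul_of_orthonormal he _ i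

lemma star_dotProduct_geomComb_eq_pow_mul [NeZero n] {e : Fin n → κ → ℂ}
    (he : ∀ i j, star (e i) ⬝ᵥ e j = if i = j then 1 else 0) (z : ℂ) (i : Fin n) :
    star (e i) ⬝ᵥ geomComb e z = z ^ (i : ℕ) * (star (e 0) ⬝ᵥ geomComb e z) := by
  simp [star_dotProduct_geomComb he]

lemma sum_smul_vecMulVec_mulVec_geomComb {e : Fin n → κ → ℂ}
    (he : ∀ i j, star (e i) ⬝ᵥ e j = if i = j then 1 else 0) (c z : ℂ) :
    (∑ i : Fin n, c ^ (i : ℕ) • vecMulVec (e i) (star (e i))) *ᵥ geomComb e z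
      = geomComb e (c * z) := by
  rw [sum_smul_vecMulVec_mulVec]
  simp only [star_dotProduct_geomComb he, ← mul_pow]
  rfl

lemma star_dotProduct_geomComb_of_circulant [NeZero n] {e f : Fin n → κ → ℂ} {A : Fin n → ℂ}
    (hA : ∀ i j, star (e i) ⬝ᵥ f j = A (j - i)) {y : ℂ} (hy : y ^ n = 1) (j : Fin n) :
    star (f j) ⬝ᵥ geomComb e y = y ^ (j : ℕ) * (star (f 0) ⬝ᵥ geomComb e y) := by
  have hshift : ∀ j, star (f j) ⬝ᵥ geomComb e y
      = y ^ (j : ℕ) * ∑ k : Fin n, y ^ (k : ℕ) * star (A (-k)) := by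
    intro j
    have hfe : ∀ k, star (f j) ⬝ᵥ e k = star (A (j - k)) := fun k => by
      rw [star_dotProduct, hA]
    simp only [geomComb, dotProduct_sum, dotProduct_smul, hfe, smul_eq_mul, Finset.mul_sum]
    rw [← Equiv.sum_comp (Equiv.addRight j)]
    refine Finset.sum_congr rfl fun k _ => ?_
    rw [Equiv.coe_addRight, pow_val_add_of_pow_eq_one hy, sub_add_cancel_right]
    ring
  rw [hshift j, hshift 0, Fin.val_zero, pow_zero, one_mul]

lemma star_mulVec_dotProduct_mulVec_eq_zero_of_ne (B : Fin 3 → Matrix κ κ ℂ) (v : κ → ℂ)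
    (h10 : star v ⬝ᵥ ((B 1)ᴴ * B 0) *ᵥ v = 0) (h20 : star v ⬝ᵥ ((B 2)ᴴ * B 0) *ᵥ v = 0)
    (h21 : star v ⬝ᵥ ((B 2)ᴴ * B 1) *ᵥ v = 0) (i j : Fin 3) (hij : i ≠ j) :
    star (B i *ᵥ v) ⬝ᵥ (B j *ᵥ v) = 0 := by
  fin_cases i <;> fin_cases j <;>
    first
    | exact absurd rfl hij
    | simp only [star_mulVec_dotProduct_mulVec]; assumption
    | rw [star_dotProduct, star_mulVec_dotProduct_mulVec, star_eq_zero]; assumption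

end InnerProduct

theorem stmt_9_general (B : Fin 3 → Matrix (Fin 3) (Fin 3) ℂ)
    (hB : ∀ i, B i ∈ Matrix.unitaryGroup (Fin 3) ℂ)
    (e f : Fin 3 → (Fin 3 → ℂ))
    (he : ∀ i j, ∑ t, star (e i t) * e j t = if i = j then 1 else 0)
    (hB21 : (B 1)ᴴ * B 0 =
      ∑ i : Fin 3, ω ^ (i : ℕ) • Matrix.vecMulVec (e i) (fun t => star (e i t)))
    (hB32 : (B 2)ᴴ * B 1 =
      ∑ j : Fin 3, ω ^ (j : ℕ) • Matrix.vecMulVec (f j) (fun t => star (f j t)))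
    (A : Fin 3 → ℂ)
    (hA : ∀ i j, (∑ t, star (e i t) * f j t) = A (j - i))
    (u : Fin 3 → (Fin 3 → ℂ))
    (hu : ∀ x, u x = (((Real.sqrt 3)⁻¹ : ℝ) : ℂ) •
      ∑ i : Fin 3, ω ^ ((i : ℕ) * (x : ℕ)) • e i) :
    ∀ x : Fin 3, ∀ i j, i ≠ j →
      ∑ t, star ((B i).mulVec (u x) t) * ((B j).mulVec (u x) t) = 0 := by
  intro x i j hij
  have hω := isPrimitiveRoot_ω
  have hω1 : ω ≠ 1 := hω.ne_one (by norm_num)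
  set y := ω ^ (x : ℕ)
  have hy : y ^ 3 = 1 := by rw [pow_right_comm, hω.pow_eq_one, one_pow]
  have hyy : star y * y = 1 := star_mul_self_of_pow_eq_one hy
  have hP : (B 1)ᴴ * B 0 = ∑ i : Fin 3, ω ^ (i : ℕ) • vecMulVec (e i) (star (e i)) := hB21
  have hQ : (B 2)ᴴ * B 1 = ∑ j : Fin 3, ω ^ (j : ℕ) • vecMulVec (f j) (star (f j)) := hB32
  have hfy := star_dotProduct_geomComb_of_circulant hA hy
  have h10 : star (geomComb e y) ⬝ᵥ ((B 1)ᴴ * B 0) *ᵥ geomComb e y = 0 := by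
    have hey := star_dotProduct_geomComb_eq_pow_mul he y
    rw [hP]
    exact star_dotProduct_sum_smul_vecMulVec_mulVec_eq_zero hey hey (by rw [hyy, mul_one])
      hω.pow_eq_one hω1
  have h21 : star (geomComb e y) ⬝ᵥ ((B 2)ᴴ * B 1) *ᵥ geomComb e y = 0 := by
    rw [hQ]
    exact star_dotProduct_sum_smul_vecMulVec_mulVec_eq_zero hfy hfy (by rw [hyy, mul_one])
      hω.pow_eq_one hω1
  have h20 : star (geomComb e y) ⬝ᵥ ((B 2)ᴴ * B 0) *ᵥ geomComb e y = 0 := by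
    have hfωy := star_dotProduct_geomComb_of_circulant hA (y := ω * y)
      (by rw [mul_pow, hω.pow_eq_one, hy, one_mul])
    rw [conjTranspose_mul_eq_of_mem_unitaryGroup (hB 1), ← mulVec_mulVec, hP,
      sum_smul_vecMulVec_mulVec_geomComb he, hQ]
    exact star_dotProduct_sum_smul_vecMulVec_mulVec_eq_zero hfy hfωy
      (by linear_combination ω ^ 2 * hyy) (by rw [pow_right_comm, hω.pow_eq_one, one_pow])
      (hω.pow_ne_one_of_pos_of_lt two_ne_zero (by norm_num))
  have hu' : u x = (((Real.sqrt 3)⁻¹ : ℝ) : ℂ) • geomComb e y := by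
    simp only [hu, geomComb, y, ← pow_mul, mul_comm]
  show star (B i *ᵥ u x) ⬝ᵥ (B j *ᵥ u x) = 0
  rw [hu', star_mulVec_smul_dotProduct_mulVec_smul,
    star_mulVec_dotProduct_mulVec_eq_zero_of_ne B _ h10 h20 h21 i j hij, mul_zero]

/-- Let `B₁, B₂, B₃` (indexed `B 0, B 1, B 2`) be `3 × 3` unitaries with
`B₂†B₁ = ∑ ωⁱ eᵢeᵢ†` and `B₃†B₂ = ∑ ωʲ fⱼfⱼ†` for orthonormal bases `{eᵢ}, {fⱼ}`,
and suppose `⟨eᵢ, fⱼ⟩ = A_{(j−i) mod 3}` for constants `A₀, A₁, A₂`. With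
`u_x = (1/√3) ∑ ω^{ix} eᵢ`, the vectors `B₁u_x, B₂u_x, B₃u_x` are pairwise
orthogonal for every `x`. -/
theorem stmt_9 (B : Fin 3 → Matrix (Fin 3) (Fin 3) ℂ)
    (hB : ∀ i, B i ∈ Matrix.unitaryGroup (Fin 3) ℂ)
    (e f : Fin 3 → (Fin 3 → ℂ))
    (he : ∀ i j, ∑ t, star (e i t) * e j t = if i = j then 1 else 0)
    (hf : ∀ i j, ∑ t, star (f i t) * f j t = if i = j then 1 else 0)
    (hB21 : (B 1)ᴴ * B 0 =
      ∑ i : Fin 3, ω ^ (i : ℕ) • Matrix.vecMulVec (e i) (fun t => star (e i t)))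
    (hB32 : (B 2)ᴴ * B 1 =
      ∑ j : Fin 3, ω ^ (j : ℕ) • Matrix.vecMulVec (f j) (fun t => star (f j t)))
    (A : Fin 3 → ℂ)
    (hA : ∀ i j, (∑ t, star (e i t) * f j t) = A (j - i))
    (u : Fin 3 → (Fin 3 → ℂ))
    (hu : ∀ x, u x = (((Real.sqrt 3)⁻¹ : ℝ) : ℂ) •
      ∑ i : Fin 3, ω ^ ((i : ℕ) * (x : ℕ)) • e i) :
    ∀ x : Fin 3, ∀ i j, i ≠ j →
      ∑ t, star ((B i).mulVec (u x) t) * ((B j).mulVec (u x) t) = 0 :=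
  stmt_9_general B hB e f he hB21 hB32 A hA u hu
end

section
/- Let B₁, ..., B_k be n×n unitary matrices with Tr(B_i† B_j) = 0 for all i ≠ j. Suppose that for each pair i < j the matrix B_i†B_j has an orthonormal eigenbasis {e^{(ij)}_1, ..., e^{(ij)}_n}, and suppose there exists an orthonormal basis {b_1, ..., b_n} of ℂ^n that is a common unbiased basis for all these eigenbases, i.e., |⟨b_t, e^{(ij)}_s⟩|² = 1/n for all t, s and all pairs i < j. Then for every t and all i ≠ j, the vectors B_i b_t and B_j b_t are orthogonal: ⟨b_t, B_i†B_j b_t⟩ = 0. (This is the content of the result that the k maximally entangled states (I ⊗ B_i)|ME_n⟩ can then be perfectly distinguished by LOCC.) -/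
/-!
Write `M = Bᵢ†Bⱼ` as `U D U†`, where the columns of the unitary `U` are the
eigenvectors `e_s` and `D = diag(μ_s)`. Then `⟨b, M b⟩ = ∑ μ_s |⟨b, e_s⟩|²`, and when `b`
is unbiased with respect to `e` all the weights equal `1/n`, so `⟨b, M b⟩ = Tr M / n = 0`.
The pairs `i > j` follow by conjugation, since `(Bᵢ†Bⱼ)† = Bⱼ†Bᵢ`.
-/

open Matrix

namespace Matrix

variable {𝕜 n : Type*} [RCLike 𝕜] [Fintype n]

theorem star_dotProduct_conjTranspose_mulVec (M : Matrix n n 𝕜) (v : n → 𝕜) :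
    star v ⬝ᵥ Mᴴ *ᵥ v = star (star v ⬝ᵥ M *ᵥ v) := by
  rw [dotProduct_mulVec, ← star_mulVec, star_dotProduct]

variable [DecidableEq n]

theorem conjTranspose_mul_self_of_orthonormal {e : n → n → 𝕜}
    (he : ∀ s t, ∑ u, star (e s u) * e t u = if s = t then 1 else 0) :
    (of e)ᵀᴴ * (of e)ᵀ = 1 := by
  ext s t
  simpa [mul_apply, one_apply] using he s t

theorem mul_transpose_of_mulVec_eq_smul {M : Matrix n n 𝕜} {e : n → n → 𝕜}
    {μ : n → 𝕜} (he : ∀ s, M *ᵥ e s = μ s • e s) :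
    M * (of e)ᵀ = (of e)ᵀ * diagonal μ := by
  ext u s
  rw [mul_diagonal]
  simpa [mul_apply, mulVec, dotProduct, mul_comm] using congrFun (he s) u

theorem eq_mul_diagonal_mul_conjTranspose {M U : Matrix n n 𝕜} {μ : n → 𝕜}
    (hU : Uᴴ * U = 1) (hMU : M * U = U * diagonal μ) :
    M = U * diagonal μ * Uᴴ := by
  rw [← hMU, Matrix.mul_assoc, mul_eq_one_comm.mp hU, Matrix.mul_one]

theorem trace_mul_diagonal_mul_conjTranspose {U : Matrix n n 𝕜} (hU : Uᴴ * U = 1)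
    (μ : n → 𝕜) : (U * diagonal μ * Uᴴ).trace = ∑ s, μ s := by
  rw [trace_mul_comm, ← Matrix.mul_assoc, hU, Matrix.one_mul, trace_diagonal]

theorem star_dotProduct_mul_diagonal_mul_conjTranspose_mulVec (U : Matrix n n 𝕜)
    (μ b : n → 𝕜) :
    star b ⬝ᵥ (U * diagonal μ * Uᴴ) *ᵥ b = ∑ s, μ s * (‖(star b ᵥ* U) s‖ ^ 2 : ℝ) := by
  have hb : Uᴴ *ᵥ b = star (star b ᵥ* U) := by rw [star_vecMul, star_star]
  rw [← mulVec_mulVec, ← mulVec_mulVec, dotProduct_mulVec, hb]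
  refine Finset.sum_congr rfl fun s _ => ?_
  rw [mulVec_diagonal, Pi.star_apply, RCLike.star_def, RCLike.ofReal_pow,
    ← RCLike.mul_conj]
  ring

theorem star_dotProduct_mulVec_eq_mul_trace_of_unbiased {M : Matrix n n 𝕜} {e : n → n → 𝕜}
    (he : ∀ s t, ∑ u, star (e s u) * e t u = if s = t then 1 else 0)
    (heig : ∀ s, ∃ μ : 𝕜, M *ᵥ e s = μ • e s) {b : n → 𝕜} {c : ℝ}
    (hb : ∀ s, ‖∑ u, star (b u) * e s u‖ ^ 2 = c) :
    star b ⬝ᵥ M *ᵥ b = c * M.trace := by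
  choose μ hμ using heig
  have hU := conjTranspose_mul_self_of_orthonormal he
  have hM := eq_mul_diagonal_mul_conjTranspose hU (mul_transpose_of_mulVec_eq_smul hμ)
  rw [hM, trace_mul_diagonal_mul_conjTranspose hU,
    star_dotProduct_mul_diagonal_mul_conjTranspose_mulVec, Finset.mul_sum]
  refine Finset.sum_congr rfl fun s _ => ?_
  rw [← hb s]
  exact mul_comm _ _

end Matrix

theorem stmt_10_general (k n : ℕ)
    (B : Fin k → Matrix (Fin n) (Fin n) ℂ)
    (horth : ∀ i j, i ≠ j → ((B i)ᴴ * B j).trace = 0)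
    (e : Fin k → Fin k → Fin n → (Fin n → ℂ))
    (heON : ∀ i j, i < j → ∀ s t,
      ∑ u, star (e i j s u) * e i j t u = if s = t then 1 else 0)
    (heig : ∀ i j, i < j → ∀ s, ∃ μ : ℂ,
      ((B i)ᴴ * B j).mulVec (e i j s) = μ • e i j s)
    (b : Fin n → (Fin n → ℂ))
    (hub : ∀ i j, i < j → ∀ t s,
      ‖∑ u, star (b t u) * e i j s u‖ ^ 2 = 1 / n) :
    ∀ t, ∀ i j, i ≠ j →
      ∑ u, star (b t u) * ((B i)ᴴ * B j).mulVec (b t) u = 0 := by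
  intro t i j hij
  have hlt : ∀ i j, i < j → star (b t) ⬝ᵥ ((B i)ᴴ * B j) *ᵥ b t = 0 := fun i j h => by
    rw [star_dotProduct_mulVec_eq_mul_trace_of_unbiased (heON i j h) (heig i j h) (hub i j h t),
      horth i j h.ne, mul_zero]
  change star (b t) ⬝ᵥ ((B i)ᴴ * B j) *ᵥ b t = 0
  rcases hij.lt_or_gt with h | h
  · exact hlt i j h
  · rw [show (B i)ᴴ * B j = ((B j)ᴴ * B i)ᴴ by simp [conjTranspose_mul],
      star_dotProduct_conjTranspose_mulVec, hlt j i h, star_zero]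

/-- Let `B₁, …, B_k` be `n × n` unitaries with `Tr(Bᵢ† Bⱼ) = 0` for `i ≠ j`. Suppose
for each pair `i < j` the matrix `Bᵢ†Bⱼ` has an orthonormal eigenbasis `{e^{(ij)}_s}`,
and `{b_t}` is an orthonormal basis with `|⟨b_t, e^{(ij)}_s⟩|² = 1/n` for all `t, s`
and all pairs `i < j` (a common unbiased basis). Then for every `t` and all `i ≠ j`,
the vectors `Bᵢ b_t` and `Bⱼ b_t` are orthogonal: `⟨b_t, Bᵢ†Bⱼ b_t⟩ = 0`. -/
theorem stmt_10 (k n : ℕ) (hk : 0 < k) (hn : 0 < n)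
    (B : Fin k → Matrix (Fin n) (Fin n) ℂ)
    (hB : ∀ i, B i ∈ Matrix.unitaryGroup (Fin n) ℂ)
    (horth : ∀ i j, i ≠ j → ((B i)ᴴ * B j).trace = 0)
    (e : Fin k → Fin k → Fin n → (Fin n → ℂ))
    (heON : ∀ i j, i < j → ∀ s t,
      ∑ u, star (e i j s u) * e i j t u = if s = t then 1 else 0)
    (heig : ∀ i j, i < j → ∀ s, ∃ μ : ℂ,
      ((B i)ᴴ * B j).mulVec (e i j s) = μ • e i j s)
    (b : Fin n → (Fin n → ℂ))
    (hbON : ∀ s t, ∑ u, star (b s u) * b t u = if s = t then 1 else 0)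
    (hub : ∀ i j, i < j → ∀ t s,
      ‖∑ u, star (b t u) * e i j s u‖ ^ 2 = 1 / n) :
    ∀ t, ∀ i j, i ≠ j →
      ∑ u, star (b t u) * ((B i)ᴴ * B j).mulVec (b t) u = 0 :=
  stmt_10_general k n B horth e heON heig b hub
end

section
/- Let k, n be positive integers, let U₁, ..., U_k be n×n unitary matrices, and let B be an n×n complex matrix with Tr(B†B) = n. Let J be a finite index set, let {X_j}_{j∈J} be n×n complex matrices with Σ_{j∈J} X_j X_j† = I_n, and for each j ∈ J let {E_{j,i}}_{i=1}^{k} be n×n complex matrices with Σ_{i=1}^{k} E_{j,i}† E_{j,i} = I_n. Then Σ_{j∈J} Σ_{i=1}^{k} ‖E_{j,i} U_i B X_j‖_F² ≤ n², where ‖·‖_F denotes the Frobenius norm. (Consequently, the success probability (1/(kn)) Σ_{j,i} ‖E_{j,i} U_i B X_j‖_F² of any one-round LOCC protocol for distinguishing the k equally likely states (I ⊗ U_iB)|ME_n⟩ is at most n/k.) -/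
/-!
By submultiplicativity and unitary invariance of the Frobenius norm,
`‖E_{j,i} Uᵢ B Xⱼ‖² ≤ ‖E_{j,i}‖² ‖B Xⱼ‖²`. Summing, `∑ᵢ ‖E_{j,i}‖² = Tr (∑ᵢ E_{j,i}† E_{j,i}) = n`
and `∑ⱼ ‖B Xⱼ‖² = Tr (B† B ∑ⱼ Xⱼ Xⱼ†) = Tr (B† B) = n`.
-/

open Matrix

attribute [local instance] Matrix.frobeniusNormedAddCommGroup

namespace Matrix

variable {𝕜 l m n : Type*} [RCLike 𝕜] [Fintype l] [Fintype m] [Fintype n]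

theorem frobenius_norm_sq_eq_sum (A : Matrix m n 𝕜) : ‖A‖ ^ 2 = ∑ i, ∑ j, ‖A i j‖ ^ 2 := by
  rw [frobenius_norm_def, ← Real.rpow_natCast, ← Real.rpow_mul (by positivity)]
  norm_num

theorem ofReal_frobenius_norm_sq (A : Matrix m n 𝕜) : ((‖A‖ ^ 2 : ℝ) : 𝕜) = (Aᴴ * A).trace := by
  simp only [frobenius_norm_sq_eq_sum, trace, diag, mul_apply, conjTranspose_apply,
    RCLike.star_def, RCLike.conj_mul, RCLike.ofReal_sum, RCLike.ofReal_pow]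
  exact Finset.sum_comm

theorem frobenius_norm_unitary_mul [DecidableEq m] {U : Matrix m m 𝕜} (hU : U ∈ unitaryGroup m 𝕜)
    (A : Matrix m n 𝕜) : ‖U * A‖ = ‖A‖ := by
  have hUU : Uᴴ * U = 1 := mem_unitaryGroup_iff'.mp hU
  have h : ‖U * A‖ ^ 2 = ‖A‖ ^ 2 := by
    apply RCLike.ofReal_injective (K := 𝕜)
    rw [ofReal_frobenius_norm_sq, ofReal_frobenius_norm_sq, conjTranspose_mul, Matrix.mul_assoc,
      ← Matrix.mul_assoc Uᴴ, hUU, Matrix.one_mul]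
  exact (pow_left_inj₀ (norm_nonneg _) (norm_nonneg _) two_ne_zero).mp h

theorem sum_frobenius_norm_sq_of_sum_conjTranspose_mul_self_eq_one [DecidableEq n]
    {ι : Type*} [Fintype ι] {E : ι → Matrix m n 𝕜} (hE : ∑ i, (E i)ᴴ * E i = 1) :
    ∑ i, ‖E i‖ ^ 2 = Fintype.card n := by
  apply RCLike.ofReal_injective (K := 𝕜)
  rw [RCLike.ofReal_sum]
  simp only [ofReal_frobenius_norm_sq]
  rw [← trace_sum, hE, trace_one, RCLike.ofReal_natCast]

theorem sum_frobenius_norm_sq_mul_of_sum_mul_conjTranspose_eq_one [DecidableEq m]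
    {ι : Type*} [Fintype ι] (B : Matrix l m 𝕜) {X : ι → Matrix m n 𝕜} (hX : ∑ j, X j * (X j)ᴴ = 1) :
    ∑ j, ‖B * X j‖ ^ 2 = ‖B‖ ^ 2 := by
  apply RCLike.ofReal_injective (K := 𝕜)
  rw [RCLike.ofReal_sum]
  have hcyc : ∀ j, ((B * X j)ᴴ * (B * X j)).trace = (Bᴴ * B * (X j * (X j)ᴴ)).trace := by
    intro j
    rw [conjTranspose_mul, Matrix.mul_assoc, trace_mul_comm]
    simp only [Matrix.mul_assoc]
  simp only [ofReal_frobenius_norm_sq, hcyc]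
  rw [← trace_sum, ← Matrix.mul_sum, hX, Matrix.mul_one]

end Matrix

theorem stmt_15_general (k n : ℕ)
    (U : Fin k → Matrix (Fin n) (Fin n) ℂ)
    (hU : ∀ i, U i ∈ Matrix.unitaryGroup (Fin n) ℂ)
    (B : Matrix (Fin n) (Fin n) ℂ) (hB : (Bᴴ * B).trace = (n : ℂ))
    (J : Type*) [Fintype J]
    (X : J → Matrix (Fin n) (Fin n) ℂ)
    (hX : ∑ j, X j * (X j)ᴴ = 1)
    (E : J → Fin k → Matrix (Fin n) (Fin n) ℂ)
    (hE : ∀ j, ∑ i, (E j i)ᴴ * E j i = 1) :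
    ∑ j, ∑ i, (∑ r, ∑ s, ‖(E j i * (U i * B) * X j) r s‖ ^ 2) ≤
      (n : ℝ) ^ 2 := by
  have hB' : ‖B‖ ^ 2 = n := RCLike.ofReal_injective (K := ℂ) <| by
    rw [ofReal_frobenius_norm_sq, hB, RCLike.ofReal_natCast]
  simp only [← frobenius_norm_sq_eq_sum]
  calc ∑ j, ∑ i, ‖E j i * (U i * B) * X j‖ ^ 2
      ≤ ∑ j, ∑ i, ‖E j i‖ ^ 2 * ‖B * X j‖ ^ 2 := by
        gcongr with j _ i _
        rw [Matrix.mul_assoc, Matrix.mul_assoc, ← frobenius_norm_unitary_mul (hU i) (B * X j),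
          ← mul_pow]
        exact pow_le_pow_left₀ (norm_nonneg _) (frobenius_norm_mul _ _) 2
    _ = n * ∑ j, ‖B * X j‖ ^ 2 := by
        simp only [← Finset.sum_mul, sum_frobenius_norm_sq_of_sum_conjTranspose_mul_self_eq_one
          (hE _), Fintype.card_fin, Finset.mul_sum]
    _ = n ^ 2 := by
        rw [sum_frobenius_norm_sq_mul_of_sum_mul_conjTranspose_eq_one B hX, hB', sq]

/-- The key estimate behind the bound `n/k` on the success probability of LOCC
discrimination of `k` equally likely states `(I ⊗ UᵢB)|ME_n⟩`: for any POVM data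
`{Xⱼ}` with `∑ⱼ XⱼXⱼ† = I` and, for each `j`, `{E_{j,i}}` with `∑ᵢ E_{j,i}†E_{j,i} = I`,
and any `B` with `Tr(B†B) = n`, one has `∑_{j,i} ‖E_{j,i} Uᵢ B Xⱼ‖_F² ≤ n²`. -/
theorem stmt_15 (k n : ℕ) (hk : 0 < k) (hn : 0 < n)
    (U : Fin k → Matrix (Fin n) (Fin n) ℂ)
    (hU : ∀ i, U i ∈ Matrix.unitaryGroup (Fin n) ℂ)
    (B : Matrix (Fin n) (Fin n) ℂ) (hB : (Bᴴ * B).trace = (n : ℂ))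
    (J : Type*) [Fintype J]
    (X : J → Matrix (Fin n) (Fin n) ℂ)
    (hX : ∑ j, X j * (X j)ᴴ = 1)
    (E : J → Fin k → Matrix (Fin n) (Fin n) ℂ)
    (hE : ∀ j, ∑ i, (E j i)ᴴ * E j i = 1) :
    ∑ j, ∑ i, (∑ r, ∑ s, ‖(E j i * (U i * B) * X j) r s‖ ^ 2) ≤
      (n : ℝ) ^ 2 :=
  stmt_15_general k n U hU B hB J X hX E hE
end
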